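/- arXiv:2604.22948 — 3 statements merged into one kernel-verified Lean document; each statement's English description precedes it below -/
import Mathlib

section
/- Let d ≥ 1 and let U : ℝ^d → ℝ be differentiable with score s(x) = -∇U(x), where s is L-Lipschitz and there exist constants c > 0, R > 0 and p ∈ (1,2] such that U(x) ≥ c‖x‖^p whenever ‖x‖ ≥ R. Then for every θ ∈ ℝ^d and every α > 0, the function x ↦ exp(-U(x) - α⟨θ, s(x)⟩) is integrable on ℝ^d with respect to Lebesgue measure; equivalently, the normalizing constant Z_θ = ∫_{ℝ^d} exp(-U(x))·exp(-α⟨θ, s(x)⟩) dx of the score-tilted surrogate is finite. -/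
/-!
The score grows at most linearly, since it is Lipschitz, so the tilt `-α⟪θ, s x⟫` is at most
`A + B‖x‖`. As `p > 1`, the tail bound `U x ≥ c‖x‖ ^ p` absorbs this, and outside a compact set
the integrand is at most `exp A · exp (-(c / 2)‖x‖ ^ p)`, which is integrable against any additive
Haar measure (integrate in polar coordinates). The integrand is continuous, hence locally
integrable, which handles the compact part.
-/

open MeasureTheory
open scoped RealInnerProductSpace

open Real Filter Asymptotics

lemma eventually_mul_le_mul_rpow_atTop {p : ℝ} (hp : 1 < p) {c : ℝ} (hc : 0 < c) (B : ℝ) :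
    ∀ᶠ t in atTop, B * t ≤ c * t ^ p := by
  filter_upwards [(tendsto_rpow_atTop (sub_pos.2 hp)).eventually_ge_atTop (B / c),
    eventually_gt_atTop 0] with t ht ht0
  calc B * t = c * (B / c) * t := by field_simp
    _ ≤ c * t ^ (p - 1) * t := by gcongr
    _ = c * t ^ p := by rw [mul_assoc, ← rpow_add_one ht0.ne', sub_add_cancel]

lemma norm_le_norm_zero_add_mul_norm {E F : Type*} [SeminormedAddCommGroup E]
    [SeminormedAddCommGroup F] {f : E → F} {L : ℝ} (hf : ∀ x x', ‖f x - f x'‖ ≤ L * ‖x - x'‖)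
    (x : E) : ‖f x‖ ≤ ‖f 0‖ + L * ‖x‖ := by
  calc ‖f x‖ ≤ ‖f 0‖ + ‖f x - f 0‖ := norm_le_insert' _ _
    _ ≤ ‖f 0‖ + L * ‖x‖ := by simpa using hf x 0

section AddHaar

variable {E : Type*} [NormedAddCommGroup E] [NormedSpace ℝ E] [FiniteDimensional ℝ E]
  [MeasurableSpace E] [BorelSpace E] (μ : Measure E) [μ.IsAddHaarMeasure]

theorem integrable_exp_neg_mul_norm_rpow {b p : ℝ} (hb : 0 < b) (hp : 0 < p) :
    Integrable (fun x : E => exp (-b * ‖x‖ ^ p)) μ := by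
  rcases subsingleton_or_nontrivial E with hE | hE
  · simp only [Subsingleton.elim _ (0 : E)]
    exact integrable_const _
  · refine (integrable_fun_norm_addHaar μ (f := fun y => exp (-b * y ^ p))).2 ?_
    refine (integrableOn_rpow_mul_exp_neg_mul_rpow (s := (Module.finrank ℝ E - 1 : ℕ))
      (neg_one_lt_zero.trans_le (Nat.cast_nonneg _)) hp hb).congr_fun (fun y _ => ?_)
      measurableSet_Ioi
    simp only [rpow_natCast, smul_eq_mul]

theorem integrable_exp_of_eventually_le_sub_mul_norm_rpow {φ : E → ℝ} (hφ : Continuous φ)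
    {A b p : ℝ} (hb : 0 < b) (hp : 0 < p)
    (h : ∀ᶠ x in cocompact E, φ x ≤ A - b * ‖x‖ ^ p) :
    Integrable (fun x => exp (φ x)) μ := by
  refine hφ.rexp.locallyIntegrable.integrable_of_isBigO_cocompact ?_
    ((integrable_exp_neg_mul_norm_rpow μ hb hp).integrableAtFilter _)
  refine IsBigO.of_bound (exp A) ?_
  filter_upwards [h] with x hx
  rw [norm_of_nonneg (exp_pos _).le, norm_of_nonneg (exp_pos _).le, ← exp_add]
  exact exp_le_exp.2 (by linarith)

end AddHaar

theorem score_tilted_surrogate_integrable_general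
    (d : ℕ)
    (U : EuclideanSpace ℝ (Fin d) → ℝ) (hU : Differentiable ℝ U)
    (s : EuclideanSpace ℝ (Fin d) → EuclideanSpace ℝ (Fin d))
    (L : ℝ) (hLip : ∀ x x', ‖s x - s x'‖ ≤ L * ‖x - x'‖)
    (c R p : ℝ) (hc : 0 < c) (hp1 : 1 < p)
    (hTail : ∀ x : EuclideanSpace ℝ (Fin d), R ≤ ‖x‖ → c * ‖x‖ ^ p ≤ U x)
    (θ : EuclideanSpace ℝ (Fin d)) (α : ℝ) :
    Integrable
      (fun x : EuclideanSpace ℝ (Fin d) =>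
        Real.exp (-U x) * Real.exp (-(α * ⟪θ, s x⟫))) volume := by
  have hUc : Continuous U := hU.continuous
  have hsc : Continuous s :=
    (LipschitzWith.of_dist_le' (K := L) (by simpa only [dist_eq_norm] using hLip)).continuous
  simp_rw [← exp_add, ← real_inner_smul_left]
  refine integrable_exp_of_eventually_le_sub_mul_norm_rpow volume (by fun_prop) (half_pos hc)
    (by linarith) (A := ‖α • θ‖ * ‖s 0‖) ?_
  filter_upwards [tendsto_norm_cocompact_atTop.eventually (eventually_ge_atTop R),
    tendsto_norm_cocompact_atTop.eventually
      (eventually_mul_le_mul_rpow_atTop hp1 (half_pos hc) (‖α • θ‖ * L))] with x hxR hx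
  have hinner : -⟪α • θ, s x⟫ ≤ ‖α • θ‖ * (‖s 0‖ + L * ‖x‖) :=
    (neg_le_abs _).trans <| (abs_real_inner_le_norm _ _).trans <|
      mul_le_mul_of_nonneg_left (norm_le_norm_zero_add_mul_norm hLip x) (norm_nonneg _)
  linarith [hTail x hxR]

/-- **Well-posedness of the score-tilted surrogate.**
If `U : ℝ^d → ℝ` is differentiable with `L`-Lipschitz score `s = -∇U` and
`U x ≥ c‖x‖^p` for `‖x‖ ≥ R` with `p ∈ (1,2]`, then for every `θ` and `α > 0`
the score-tilted integrand `x ↦ exp(-U x - α⟨θ, s x⟩)` is Lebesgue-integrable,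
i.e. the normalizing constant `Z_θ` is finite. -/
theorem score_tilted_surrogate_integrable
    (d : ℕ) (hd : 1 ≤ d)
    (U : EuclideanSpace ℝ (Fin d) → ℝ) (hU : Differentiable ℝ U)
    (s : EuclideanSpace ℝ (Fin d) → EuclideanSpace ℝ (Fin d))
    (hs : ∀ x, s x = -gradient U x)
    (L : ℝ) (hLip : ∀ x x', ‖s x - s x'‖ ≤ L * ‖x - x'‖)
    (c R p : ℝ) (hc : 0 < c) (hR : 0 < R) (hp1 : 1 < p) (hp2 : p ≤ 2)
    (hTail : ∀ x : EuclideanSpace ℝ (Fin d), R ≤ ‖x‖ → c * ‖x‖ ^ p ≤ U x)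
    (θ : EuclideanSpace ℝ (Fin d)) (α : ℝ) (hα : 0 < α) :
    Integrable
      (fun x : EuclideanSpace ℝ (Fin d) =>
        Real.exp (-U x) * Real.exp (-(α * ⟪θ, s x⟫))) volume :=
  score_tilted_surrogate_integrable_general d U hU s L hLip c R p hc hp1 hTail θ α
end

section
/- Let S be a real symmetric positive semidefinite d×d matrix, let β > 0, and let U be a real symmetric d×d matrix. For α ≥ 0 suppose Σ(α) is a real d×d matrix satisfying the Lyapunov equation (β I + α S) Σ(α) + Σ(α) (β I + α S) = U. Then for any α₁ ≥ α₂ ≥ 0 for which such solutions Σ(α₁), Σ(α₂) exist, the Frobenius norms satisfy ‖Σ(α₁)‖_F ≤ ‖Σ(α₂)‖_F ≤ ‖Σ(0)‖_F. -/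
/-!
Diagonalize `S = Q diag(λ) Qᵀ` with `Q` orthogonal and `λ ≥ 0`. Conjugation by `Q` preserves
the Frobenius norm and turns the Lyapunov equation at strength `α` into the entrywise equations
`(2β + α (λᵢ + λⱼ)) Σ̃ᵢⱼ = Ũᵢⱼ`, so each entry `|Σ̃ᵢⱼ| = |Ũᵢⱼ| / (2β + α (λᵢ + λⱼ))`
decreases in `α`.
-/

/-- Frobenius norm of a real square matrix. -/
noncomputable def frobeniusNorm {d : ℕ} (M : Matrix (Fin d) (Fin d) ℝ) : ℝ :=
  Real.sqrt (∑ i, ∑ j, (M i j) ^ 2)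

open Matrix Unitary

namespace Matrix

variable {n : Type*} [Fintype n]

lemma sum_sq_apply_eq_trace_transpose_mul (M : Matrix n n ℝ) :
    ∑ i, ∑ j, M i j ^ 2 = (Mᵀ * M).trace := by
  rw [Finset.sum_comm]
  simp [trace, mul_apply, sq]

lemma sum_sq_apply_conj_unitary [DecidableEq n] {u : Matrix n n ℝ} (hu : u ∈ unitaryGroup n ℝ)
    (M : Matrix n n ℝ) : ∑ i, ∑ j, (u * M * star u) i j ^ 2 = ∑ i, ∑ j, M i j ^ 2 := by
  have hstar : star u = uᵀ := conjTranspose_eq_transpose_of_trivial u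
  have hu' : uᵀ * u = 1 := hstar ▸ Unitary.star_mul_self_of_mem hu
  simp only [sum_sq_apply_eq_trace_transpose_mul, transpose_mul, hstar, transpose_transpose]
  calc (u * (Mᵀ * uᵀ) * (u * M * uᵀ)).trace = (u * (Mᵀ * M) * uᵀ).trace := by
        simp only [mul_assoc, ← mul_assoc uᵀ u, hu', one_mul]
    _ = (Mᵀ * M).trace := by rw [trace_mul_cycle, ← mul_assoc, hu', one_mul]

lemma diagonal_mul_add_mul_diagonal_apply [DecidableEq n] (a : n → ℝ) (X : Matrix n n ℝ)
    (i j : n) : (diagonal a * X + X * diagonal a) i j = (a i + a j) * X i j := by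
  simp only [add_apply, diagonal_mul, mul_diagonal]
  ring

lemma sq_apply_le_of_diagonal_lyapunov [DecidableEq n] {a b : n → ℝ} {V X Y : Matrix n n ℝ}
    {i j : n} (hpos : 0 < b i + b j) (hle : b i + b j ≤ a i + a j)
    (hX : diagonal a * X + X * diagonal a = V) (hY : diagonal b * Y + Y * diagonal b = V) :
    X i j ^ 2 ≤ Y i j ^ 2 := by
  have hXij : X i j = V i j / (a i + a j) := by
    rw [← hX, diagonal_mul_add_mul_diagonal_apply]; field_simp [(hpos.trans_le hle).ne']
  have hYij : Y i j = V i j / (b i + b j) := by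
    rw [← hY, diagonal_mul_add_mul_diagonal_apply]; field_simp [hpos.ne']
  rw [hXij, hYij, div_pow, div_pow]
  gcongr

lemma sum_sq_apply_le_of_lyapunov [DecidableEq n] {S U X Y : Matrix n n ℝ} (hS : S.PosSemidef)
    {β a b : ℝ} (hβ : 0 < β) (hb : 0 ≤ b) (hab : b ≤ a)
    (hX : (β • 1 + a • S) * X + X * (β • 1 + a • S) = U)
    (hY : (β • 1 + b • S) * Y + Y * (β • 1 + b • S) = U) :
    ∑ i, ∑ j, X i j ^ 2 ≤ ∑ i, ∑ j, Y i j ^ 2 := by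
  set u := hS.1.eigenvectorUnitary
  set ev := hS.1.eigenvalues
  set φ := conjStarAlgAut ℝ (Matrix n n ℝ) (star u)
  have hφ (c : ℝ) : φ (β • 1 + c • S) = diagonal (fun i => β + c * ev i) := by
    rw [map_add, map_smul, map_smul, map_one, hS.1.conjStarAlgAut_star_eigenvectorUnitary,
      RCLike.ofReal_real_eq_id, Function.id_comp, smul_one_eq_diagonal, ← diagonal_smul,
      diagonal_add]
    rfl
  have hconj (c : ℝ) (Z : Matrix n n ℝ) (hZ : (β • 1 + c • S) * Z + Z * (β • 1 + c • S) = U) :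
      diagonal (fun i => β + c * ev i) * φ Z + φ Z * diagonal (fun i => β + c * ev i) = φ U := by
    rw [← hφ, ← map_mul, ← map_mul, ← map_add, hZ]
  have hφ_apply (Z : Matrix n n ℝ) :
      φ Z = star (u : Matrix n n ℝ) * Z * star (star (u : Matrix n n ℝ)) := by
    simp [φ]
  have hu : star (u : Matrix n n ℝ) ∈ unitaryGroup n ℝ := star_mem u.2
  rw [← sum_sq_apply_conj_unitary hu X, ← sum_sq_apply_conj_unitary hu Y, ← hφ_apply, ← hφ_apply]
  refine Finset.sum_le_sum fun i _ => Finset.sum_le_sum fun j _ =>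
    sq_apply_le_of_diagonal_lyapunov ?_ ?_ (hconj a X hX) (hconj b Y hY)
  all_goals have := hS.eigenvalues_nonneg i; have := hS.eigenvalues_nonneg j
  · positivity
  · gcongr

end Matrix

theorem lyapunov_solution_frobenius_monotone_general
    (d : ℕ) (S U : Matrix (Fin d) (Fin d) ℝ)
    (hS : S.PosSemidef) (β : ℝ) (hβ : 0 < β)
    (Sf : ℝ → Matrix (Fin d) (Fin d) ℝ)
    (α₁ α₂ : ℝ) (hα₂ : 0 ≤ α₂) (hα : α₂ ≤ α₁)
    (h₁ : (β • (1 : Matrix (Fin d) (Fin d) ℝ) + α₁ • S) * Sf α₁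
        + Sf α₁ * (β • (1 : Matrix (Fin d) (Fin d) ℝ) + α₁ • S) = U)
    (h₂ : (β • (1 : Matrix (Fin d) (Fin d) ℝ) + α₂ • S) * Sf α₂
        + Sf α₂ * (β • (1 : Matrix (Fin d) (Fin d) ℝ) + α₂ • S) = U)
    (h₀ : (β • (1 : Matrix (Fin d) (Fin d) ℝ)) * Sf 0
        + Sf 0 * (β • (1 : Matrix (Fin d) (Fin d) ℝ)) = U) :
    frobeniusNorm (Sf α₁) ≤ frobeniusNorm (Sf α₂) ∧
      frobeniusNorm (Sf α₂) ≤ frobeniusNorm (Sf 0) := by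
  have h₀' : (β • (1 : Matrix (Fin d) (Fin d) ℝ) + (0 : ℝ) • S) * Sf 0
      + Sf 0 * (β • (1 : Matrix (Fin d) (Fin d) ℝ) + (0 : ℝ) • S) = U := by
    simpa using h₀
  exact ⟨Real.sqrt_le_sqrt (sum_sq_apply_le_of_lyapunov hS hβ hα₂ hα h₁ h₂),
    Real.sqrt_le_sqrt (sum_sq_apply_le_of_lyapunov hS hβ le_rfl hα₂ h₂ h₀')⟩

/-- **Monotonicity of the Lyapunov solution in the repellence strength.**
Let `S` be real symmetric positive semidefinite, `β > 0`, `U` real symmetric,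
and for `α ≥ 0` let `Σ(α)` solve `(βI + αS)Σ(α) + Σ(α)(βI + αS) = U`. Then for
`α₁ ≥ α₂ ≥ 0` (for which solutions exist, including at `0`),
`‖Σ(α₁)‖_F ≤ ‖Σ(α₂)‖_F ≤ ‖Σ(0)‖_F`. -/
theorem lyapunov_solution_frobenius_monotone
    (d : ℕ) (S U : Matrix (Fin d) (Fin d) ℝ)
    (hS : S.PosSemidef) (β : ℝ) (hβ : 0 < β) (hU : U.IsSymm)
    (Sf : ℝ → Matrix (Fin d) (Fin d) ℝ)
    (α₁ α₂ : ℝ) (hα₂ : 0 ≤ α₂) (hα : α₂ ≤ α₁)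
    (h₁ : (β • (1 : Matrix (Fin d) (Fin d) ℝ) + α₁ • S) * Sf α₁
        + Sf α₁ * (β • (1 : Matrix (Fin d) (Fin d) ℝ) + α₁ • S) = U)
    (h₂ : (β • (1 : Matrix (Fin d) (Fin d) ℝ) + α₂ • S) * Sf α₂
        + Sf α₂ * (β • (1 : Matrix (Fin d) (Fin d) ℝ) + α₂ • S) = U)
    (h₀ : (β • (1 : Matrix (Fin d) (Fin d) ℝ)) * Sf 0
        + Sf 0 * (β • (1 : Matrix (Fin d) (Fin d) ℝ)) = U) :
    frobeniusNorm (Sf α₁) ≤ frobeniusNorm (Sf α₂) ∧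
      frobeniusNorm (Sf α₂) ≤ frobeniusNorm (Sf 0) :=
  lyapunov_solution_frobenius_monotone_general d S U hS β hβ Sf α₁ α₂ hα₂ hα h₁ h₂ h₀
end

section
/- Let S be a real symmetric positive definite d×d matrix with smallest eigenvalue λ_min > 0, let β > 0 and α ≥ 0, let U be a real symmetric d×d matrix, and let Σ be a real d×d matrix satisfying (β I + α S) Σ + Σ (β I + α S) = U. Then ‖Σ‖_F ≤ ‖U‖_F / (2β + 2α λ_min). In particular, Σ = Σ(α) satisfies ‖Σ(α)‖_F = O(1/α) as α → ∞. -/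
open Matrix

/-- **`O(1/α)` scaling of the Lyapunov solution.**
Let `S` be real symmetric positive definite with smallest eigenvalue
`λmin > 0` (so `λmin` is an eigenvalue of `S` and `⟨v, Sv⟩ ≥ λmin‖v‖²` for all
`v`), `β > 0`, `α ≥ 0`, `U` real symmetric, and let `Σ` satisfy the Lyapunov
equation `(βI + αS)Σ + Σ(βI + αS) = U`. Then
`‖Σ‖_F ≤ ‖U‖_F / (2β + 2α λmin)`; in particular `‖Σ(α)‖_F = O(1/α)`. -/
theorem lyapunov_solution_frobenius_bound
    (d : ℕ) (S U Sg : Matrix (Fin d) (Fin d) ℝ)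
    (hS : S.PosDef) (hU : U.IsSymm)
    (lmin : ℝ) (hlminpos : 0 < lmin)
    (hlmin_eigen : ∃ v : Fin d → ℝ, v ≠ 0 ∧ S *ᵥ v = lmin • v)
    (hlmin_le : ∀ v : Fin d → ℝ, lmin * (v ⬝ᵥ v) ≤ v ⬝ᵥ (S *ᵥ v))
    (β α : ℝ) (hβ : 0 < β) (hα : 0 ≤ α)
    (hlyap : (β • (1 : Matrix (Fin d) (Fin d) ℝ) + α • S) * Sg
        + Sg * (β • (1 : Matrix (Fin d) (Fin d) ℝ) + α • S) = U) :
    frobeniusNorm Sg ≤ frobeniusNorm U / (2 * β + 2 * α * lmin) := by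
  classical
  have hSsym : ∀ i j, S i j = S j i := by
    intro i j
    have h := hS.1
    calc S i j = Sᴴ i j := by rw [h]
    _ = S j i := by simp [Matrix.conjTranspose_apply]
  set c : ℝ := β + α * lmin with hc
  have hcpos : 0 < c := by positivity
  set N2 : ℝ := ∑ i, ∑ j, (Sg i j) ^ 2 with hN2
  have hN2nonneg : 0 ≤ N2 := by positivity
  set M2 : ℝ := ∑ i, ∑ j, (U i j) ^ 2 with hM2
  have hM2nonneg : 0 ≤ M2 := by positivity
  set IP : ℝ := ∑ i, ∑ j, Sg i j * U i j with hIP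
  -- column bound
  have hT1 : lmin * N2 ≤ ∑ i, ∑ j, Sg i j * (S * Sg) i j := by
    rw [hN2, show (∑ i, ∑ j, (Sg i j) ^ 2) = ∑ j, ∑ i, (Sg i j) ^ 2 from Finset.sum_comm,
      show (∑ i, ∑ j, Sg i j * (S * Sg) i j) = ∑ j, ∑ i, Sg i j * (S * Sg) i j
        from Finset.sum_comm, Finset.mul_sum]
    apply Finset.sum_le_sum
    intro j _
    have h := hlmin_le (fun i => Sg i j)
    have e1 : (fun i => Sg i j) ⬝ᵥ (fun i => Sg i j) = ∑ i, (Sg i j) ^ 2 := by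
      simp [dotProduct, pow_two]
    have e2 : (fun i => Sg i j) ⬝ᵥ (S *ᵥ fun i => Sg i j)
        = ∑ i, Sg i j * (S * Sg) i j := by
      simp [dotProduct, mulVec, Matrix.mul_apply]
    rw [e1, e2] at h
    exact h
  -- row bound
  have hT2 : lmin * N2 ≤ ∑ i, ∑ j, Sg i j * (Sg * S) i j := by
    rw [hN2, Finset.mul_sum]
    apply Finset.sum_le_sum
    intro i _
    have h := hlmin_le (fun k => Sg i k)
    have e1 : (fun k => Sg i k) ⬝ᵥ (fun k => Sg i k) = ∑ j, (Sg i j) ^ 2 := by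
      simp [dotProduct, pow_two]
    have e2 : (fun k => Sg i k) ⬝ᵥ (S *ᵥ fun k => Sg i k)
        = ∑ j, Sg i j * (Sg * S) i j := by
      simp only [dotProduct, mulVec, Matrix.mul_apply]
      apply Finset.sum_congr rfl
      intro j _
      rw [Finset.mul_sum, Finset.mul_sum]
      apply Finset.sum_congr rfl
      intro k _
      rw [hSsym j k]; ring
    rw [e1, e2] at h
    exact h
  -- expand U
  have hUeq : U = β • Sg + α • (S * Sg) + (β • Sg + α • (Sg * S)) := by
    rw [← hlyap]
    simp [add_mul, mul_add, Matrix.smul_mul, Matrix.mul_smul]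
  have hIPexp : IP = 2 * β * N2 + α * (∑ i, ∑ j, Sg i j * (S * Sg) i j)
      + α * (∑ i, ∑ j, Sg i j * (Sg * S) i j) := by
    rw [hIP, hUeq, hN2]
    simp only [Matrix.add_apply, Matrix.smul_apply, smul_eq_mul, Finset.mul_sum,
      ← Finset.sum_add_distrib]
    exact Finset.sum_congr rfl fun i _ => Finset.sum_congr rfl fun j _ => by ring
  have hkey : 2 * c * N2 ≤ IP := by
    rw [hIPexp]
    have h1 := mul_le_mul_of_nonneg_left hT1 hα
    have h2 := mul_le_mul_of_nonneg_left hT2 hα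
    nlinarith [h1, h2]
  -- Cauchy–Schwarz
  have hCS : IP ^ 2 ≤ N2 * M2 := by
    rw [hIP, hN2, hM2]
    rw [← Fintype.sum_prod_type (f := fun (p : Fin d × Fin d) => Sg p.1 p.2 * U p.1 p.2),
        ← Fintype.sum_prod_type (f := fun (p : Fin d × Fin d) => (Sg p.1 p.2) ^ 2),
        ← Fintype.sum_prod_type (f := fun (p : Fin d × Fin d) => (U p.1 p.2) ^ 2)]
    exact Finset.sum_mul_sq_le_sq_mul_sq Finset.univ _ _
  have hIPle : IP ≤ Real.sqrt N2 * Real.sqrt M2 := by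
    have : IP ≤ Real.sqrt (IP ^ 2) := by
      rw [Real.sqrt_sq_eq_abs]; exact le_abs_self _
    calc IP ≤ Real.sqrt (IP ^ 2) := this
    _ ≤ Real.sqrt (N2 * M2) := Real.sqrt_le_sqrt hCS
    _ = Real.sqrt N2 * Real.sqrt M2 := Real.sqrt_mul hN2nonneg _
  have hden : 2 * β + 2 * α * lmin = 2 * c := by rw [hc]; ring
  rw [frobeniusNorm, frobeniusNorm, ← hN2, ← hM2, hden]
  have h2c : (0:ℝ) < 2 * c := by linarith
  rcases eq_or_lt_of_le hN2nonneg with h0 | h0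
  · rw [← h0, Real.sqrt_zero]
    exact div_nonneg (Real.sqrt_nonneg _) (le_of_lt h2c)
  · have hsq : 0 < Real.sqrt N2 := Real.sqrt_pos.mpr h0
    rw [le_div_iff₀ h2c]
    have hNs : N2 = Real.sqrt N2 * Real.sqrt N2 := (Real.mul_self_sqrt hN2nonneg).symm
    have h2 : 2 * c * (Real.sqrt N2 * Real.sqrt N2) ≤ Real.sqrt N2 * Real.sqrt M2 := by
      rw [← hNs]; exact le_trans hkey hIPle
    nlinarith [h2, hsq]
end
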